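/- Under the hypotheses and notation of the preceding Lyapunov setup (P_1, P_2, W_1, W_2 symmetric positive definite solving the two Lyapunov equations for F̄(π) and F̄(π)+LH̄(π); constants c_1, c_3, c_4 as defined; c_2 := c_1 − c_3 > 0), let δ ∈ (0, c_2). Then for every (z, e) ∈ ℝ^n × ℝ^n with V(z,e) ≤ ((c_2 − δ)/c_4)², the derivative of V along the augmented dynamics satisfies 2 z^⊤P_1 ż + 2 e^⊤P_2 ė ≤ −δ · V(z,e), where ż = A z + B(z^⊤Q z + H̄(π)(z+e)) and ė = (F̄(π)+L H̄(π)) e + (B+L) H̄(π) z + (B+L)(2 z^⊤Q e + e^⊤Q e). -/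

import Mathlib

open Matrix
noncomputable section

/-- Spectral norm: operator norm induced by the Euclidean norms. -/
def opNorm {m n : Type*} [Fintype m] [Fintype n] [DecidableEq n] (M : Matrix m n ℝ) : ℝ :=
  ‖(Matrix.toEuclideanLin M).toContinuousLinearMap‖

/-- Euclidean norm of a real vector. -/
def evnorm {n : Type*} [Fintype n] (v : n → ℝ) : ℝ :=
  Real.sqrt (∑ i, (v i) ^ 2)

variable {np nc : ℕ}

/-- `A = [[A_p, B_p C_c],[0, A_c]]`. -/
def Amat (Ap : Matrix (Fin np) (Fin np) ℝ) (Ac : Matrix (Fin nc) (Fin nc) ℝ)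
    (Bp : Matrix (Fin np) (Fin 1) ℝ) (Cc : Matrix (Fin 1) (Fin nc) ℝ) :
    Matrix (Fin np ⊕ Fin nc) (Fin np ⊕ Fin nc) ℝ :=
  Matrix.fromBlocks Ap (Bp * Cc) 0 Ac

/-- `B = [B_p D_c; B_c]`. -/
def Bmat (Bp : Matrix (Fin np) (Fin 1) ℝ) (Bc : Matrix (Fin nc) (Fin 1) ℝ) (Dc : ℝ) :
    Matrix (Fin np ⊕ Fin nc) (Fin 1) ℝ :=
  Matrix.fromRows (Dc • Bp) Bc

/-- `H̄(π) = [2 π^⊤ Q_p, 0]`. -/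
def Hbar (Qp : Matrix (Fin np) (Fin np) ℝ) (π : Fin np → ℝ) :
    Matrix (Fin 1) (Fin np ⊕ Fin nc) ℝ :=
  Matrix.of fun _ j => Sum.elim (fun i => 2 * (π ᵥ* Qp) i) (fun _ => 0) j

/-- `F̄(π) = A + B H̄(π)`. -/
def Fbar (Ap : Matrix (Fin np) (Fin np) ℝ) (Ac : Matrix (Fin nc) (Fin nc) ℝ)
    (Bp : Matrix (Fin np) (Fin 1) ℝ) (Bc : Matrix (Fin nc) (Fin 1) ℝ)
    (Cc : Matrix (Fin 1) (Fin nc) ℝ) (Dc : ℝ)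
    (Qp : Matrix (Fin np) (Fin np) ℝ) (π : Fin np → ℝ) :
    Matrix (Fin np ⊕ Fin nc) (Fin np ⊕ Fin nc) ℝ :=
  Amat Ap Ac Bp Cc + Bmat Bp Bc Dc * Hbar Qp π

/-- `Q = [[Q_p, 0],[0, 0]]`. -/
def Qmat (Qp : Matrix (Fin np) (Fin np) ℝ) :
    Matrix (Fin np ⊕ Fin nc) (Fin np ⊕ Fin nc) ℝ :=
  Matrix.fromBlocks Qp 0 0 0

/-- The closed-loop vector field `ż = Az + B(z^⊤Qz + H̄(π)(z+e))`
(`B` column acting by scalar multiplication). -/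
def zdot (Ap : Matrix (Fin np) (Fin np) ℝ) (Ac : Matrix (Fin nc) (Fin nc) ℝ)
    (Bp : Matrix (Fin np) (Fin 1) ℝ) (Bc : Matrix (Fin nc) (Fin 1) ℝ)
    (Cc : Matrix (Fin 1) (Fin nc) ℝ) (Dc : ℝ)
    (Qp : Matrix (Fin np) (Fin np) ℝ) (π : Fin np → ℝ)
    (z e : Fin np ⊕ Fin nc → ℝ) : Fin np ⊕ Fin nc → ℝ :=
  Amat Ap Ac Bp Cc *ᵥ z +
    (z ⬝ᵥ (Qmat Qp *ᵥ z) + (fun j => Hbar Qp π 0 j) ⬝ᵥ (z + e)) •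
      fun i => Bmat Bp Bc Dc i 0

/-- The estimation-error vector field
`ė = (F̄(π)+LH̄(π))e + (B+L)H̄(π)z + (B+L)(2z^⊤Qe + e^⊤Qe)`. -/
def edot (Ap : Matrix (Fin np) (Fin np) ℝ) (Ac : Matrix (Fin nc) (Fin nc) ℝ)
    (Bp : Matrix (Fin np) (Fin 1) ℝ) (Bc : Matrix (Fin nc) (Fin 1) ℝ)
    (Cc : Matrix (Fin 1) (Fin nc) ℝ) (Dc : ℝ)
    (Qp : Matrix (Fin np) (Fin np) ℝ) (π : Fin np → ℝ)
    (L : Matrix (Fin np ⊕ Fin nc) (Fin 1) ℝ)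
    (z e : Fin np ⊕ Fin nc → ℝ) : Fin np ⊕ Fin nc → ℝ :=
  (Fbar Ap Ac Bp Bc Cc Dc Qp π + L * Hbar Qp π) *ᵥ e +
    ((Bmat Bp Bc Dc + L) * Hbar Qp π) *ᵥ z +
    (2 * (z ⬝ᵥ (Qmat Qp *ᵥ e)) + e ⬝ᵥ (Qmat Qp *ᵥ e)) •
      fun i => (Bmat Bp Bc Dc + L) i 0

/-!
Along the augmented dynamics the linear parts of `ż` and `ė` contribute
`-(zᵀW₁z + eᵀW₂e) ≤ -c₁V` by the two Lyapunov equations. Every remaining term is bounded through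
`‖z‖ ≤ √V / √λ_min(P₁)` and `‖e‖ ≤ √V / √λ_min(P₂)`: the terms bilinear in `(z, e)` by `c₃V`, the
cubic ones by `c₄V^{3/2}`, and on the sublevel set `√V ≤ (c₂ - δ)/c₄` the latter is at most
`(c₂ - δ)V`. Since `c₂ = c₁ - c₃`, the three bounds add up to `-δV`.
-/

lemma mul_le_mul_of_abs_le_of_abs_le {a b A B : ℝ} (ha : |a| ≤ A) (hb : |b| ≤ B) :
    a * b ≤ A * B :=
  (le_abs_self _).trans <| (abs_mul a b).trans_le <|
    mul_le_mul ha hb (abs_nonneg _) ((abs_nonneg _).trans ha)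

lemma mul_sqrt_le_of_le_div_sq {c d V : ℝ} (hd : 0 ≤ d) (hV : V ≤ (d / c) ^ 2) :
    c * √V ≤ d := by
  rcases le_or_gt c 0 with hc | hc
  · exact (mul_nonpos_of_nonpos_of_nonneg hc (Real.sqrt_nonneg V)).trans hd
  · have h := Real.sqrt_le_sqrt hV
    rw [Real.sqrt_sq (div_nonneg hd hc.le), le_div_iff₀ hc] at h
    linarith

lemma rpow_three_div_two_eq_sqrt_pow {x : ℝ} (hx : 0 ≤ x) : x ^ ((3 : ℝ) / 2) = √x ^ 3 := by
  rw [Real.sqrt_eq_rpow, ← Real.rpow_natCast, ← Real.rpow_mul hx]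
  norm_num

lemma col_mul_row_mulVec {ι κ : Type*} [Fintype κ] (C : Matrix ι (Fin 1) ℝ)
    (R : Matrix (Fin 1) κ ℝ) (w : κ → ℝ) :
    (C * R) *ᵥ w = ((fun j => R 0 j) ⬝ᵥ w) • fun i => C i 0 := by
  ext i
  simp [mulVec, dotProduct, Matrix.mul_apply, Finset.mul_sum, mul_comm, mul_left_comm]

lemma mulVec_col {ι κ : Type*} [Fintype κ] (M : Matrix ι κ ℝ) (C : Matrix κ (Fin 1) ℝ) :
    (M *ᵥ fun i => C i 0) = fun i => (M * C) i 0 := by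
  ext i
  simp [mulVec, dotProduct, Matrix.mul_apply]

section EuclideanBounds

variable {ι κ : Type*} [Fintype ι] [Fintype κ]

lemma evnorm_nonneg (v : ι → ℝ) : 0 ≤ evnorm v := Real.sqrt_nonneg _

lemma evnorm_sq (v : ι → ℝ) : evnorm v ^ 2 = v ⬝ᵥ v := by
  rw [evnorm, Real.sq_sqrt (by positivity)]
  simp [dotProduct, sq]

lemma evnorm_eq_norm_toLp (v : ι → ℝ) : evnorm v = ‖WithLp.toLp 2 v‖ := by
  simp [evnorm, EuclideanSpace.norm_eq]

lemma dotProduct_eq_inner_toLp (v w : ι → ℝ) :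
    v ⬝ᵥ w = inner ℝ (WithLp.toLp 2 v) (WithLp.toLp 2 w) := by
  simp [EuclideanSpace.inner_eq_star_dotProduct, dotProduct_comm]

lemma opNorm_nonneg [DecidableEq κ] (M : Matrix ι κ ℝ) : 0 ≤ opNorm M :=
  norm_nonneg _

lemma abs_dotProduct_mulVec_le_opNorm [DecidableEq κ] (M : Matrix ι κ ℝ) (v : ι → ℝ)
    (w : κ → ℝ) : |v ⬝ᵥ (M *ᵥ w)| ≤ opNorm M * evnorm v * evnorm w := by
  have hM : ‖WithLp.toLp 2 (M *ᵥ w)‖ ≤ opNorm M * ‖WithLp.toLp 2 w‖ :=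
    (toEuclideanLin M).toContinuousLinearMap.le_opNorm (WithLp.toLp 2 w)
  rw [dotProduct_eq_inner_toLp, evnorm_eq_norm_toLp, evnorm_eq_norm_toLp]
  calc _ ≤ ‖WithLp.toLp 2 v‖ * ‖WithLp.toLp 2 (M *ᵥ w)‖ := abs_real_inner_le_norm _ _
    _ ≤ ‖WithLp.toLp 2 v‖ * (opNorm M * ‖WithLp.toLp 2 w‖) := by gcongr
    _ = _ := by ring

lemma abs_dotProduct_col_le_opNorm (M : Matrix ι (Fin 1) ℝ) (v : ι → ℝ) :
    |v ⬝ᵥ fun i => M i 0| ≤ opNorm M * evnorm v := by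
  simpa [evnorm, mulVec, dotProduct] using abs_dotProduct_mulVec_le_opNorm M v fun _ => 1

lemma two_mul_dotProduct_mulVec_mulVec_of_lyapunov {F P W : Matrix ι ι ℝ}
    (hP : P.IsHermitian) (hLyap : Fᵀ * P + P * F = -W) (v : ι → ℝ) :
    2 * (v ⬝ᵥ (P *ᵥ (F *ᵥ v))) = -(v ⬝ᵥ (W *ᵥ v)) := by
  have h := congrArg (fun M => v ⬝ᵥ (M *ᵥ v)) hLyap
  have hsymm := dotProduct_transpose_mulVec P (F *ᵥ v) v
  simp only [add_mulVec, neg_mulVec, dotProduct_add, dotProduct_neg, ← mulVec_mulVec,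
    dotProduct_transpose_mulVec, (isHermitian_iff_isSymm.1 hP).eq] at h hsymm
  rw [dotProduct_comm] at hsymm
  linarith

end EuclideanBounds

namespace Matrix.IsHermitian

variable {ι : Type*} [Fintype ι] [DecidableEq ι]

lemma sum_dotProduct_eigenvectorBasis_mul {M : Matrix ι ι ℝ} (hM : M.IsHermitian)
    (v w : ι → ℝ) :
    ∑ i, (v ⬝ᵥ hM.eigenvectorBasis i) * (hM.eigenvectorBasis i ⬝ᵥ w) = v ⬝ᵥ w := by
  simpa only [dotProduct_eq_inner_toLp, WithLp.toLp_ofLp] using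
    hM.eigenvectorBasis.sum_inner_mul_inner (WithLp.toLp 2 v) (WithLp.toLp 2 w)

lemma dotProduct_mulVec_eq_sum_eigenvalues {M : Matrix ι ι ℝ} (hM : M.IsHermitian)
    (v : ι → ℝ) :
    v ⬝ᵥ (M *ᵥ v) = ∑ i, hM.eigenvalues i * (v ⬝ᵥ hM.eigenvectorBasis i) ^ 2 := by
  rw [← hM.sum_dotProduct_eigenvectorBasis_mul]
  refine Finset.sum_congr rfl fun i _ => ?_
  have hsymm := dotProduct_transpose_mulVec M v (hM.eigenvectorBasis i)
  rw [(isHermitian_iff_isSymm.1 hM).eq] at hsymm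
  rw [← hsymm, mulVec_eigenvectorBasis, dotProduct_smul, smul_eq_mul]
  ring

lemma evnorm_sq_eq_sum_eigenvectorBasis {M : Matrix ι ι ℝ} (hM : M.IsHermitian) (v : ι → ℝ) :
    evnorm v ^ 2 = ∑ i, (v ⬝ᵥ hM.eigenvectorBasis i) ^ 2 := by
  rw [evnorm_sq, ← hM.sum_dotProduct_eigenvectorBasis_mul]
  simp_rw [dotProduct_comm _ v, sq]

lemma iInf_eigenvalues_mul_le {M : Matrix ι ι ℝ} (hM : M.IsHermitian) (v : ι → ℝ) :
    (⨅ i, hM.eigenvalues i) * evnorm v ^ 2 ≤ v ⬝ᵥ (M *ᵥ v) := by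
  rw [hM.evnorm_sq_eq_sum_eigenvectorBasis, hM.dotProduct_mulVec_eq_sum_eigenvalues,
    Finset.mul_sum]
  gcongr with i
  exact ciInf_le (Set.finite_range _).bddBelow i

lemma le_iSup_eigenvalues_mul {M : Matrix ι ι ℝ} (hM : M.IsHermitian) (v : ι → ℝ) :
    v ⬝ᵥ (M *ᵥ v) ≤ (⨆ i, hM.eigenvalues i) * evnorm v ^ 2 := by
  rw [hM.evnorm_sq_eq_sum_eigenvectorBasis, hM.dotProduct_mulVec_eq_sum_eigenvalues,
    Finset.mul_sum]
  gcongr with i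
  exact le_ciSup (Set.finite_range _).bddAbove i

lemma div_mul_dotProduct_mulVec_le {P W : Matrix ι ι ℝ} (hP : P.IsHermitian)
    (hW : W.IsHermitian) {μ Λ : ℝ} (hμ0 : 0 ≤ μ) (hμ : μ ≤ ⨅ i, hW.eigenvalues i) (hΛ0 : 0 < Λ)
    (hΛ : ⨆ i, hP.eigenvalues i ≤ Λ) (v : ι → ℝ) :
    μ / Λ * (v ⬝ᵥ (P *ᵥ v)) ≤ v ⬝ᵥ (W *ᵥ v) :=
  calc μ / Λ * (v ⬝ᵥ (P *ᵥ v)) ≤ μ / Λ * (Λ * evnorm v ^ 2) := by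
        gcongr
        exact (hP.le_iSup_eigenvalues_mul v).trans (by gcongr)
    _ = μ * evnorm v ^ 2 := by field_simp
    _ ≤ (⨅ i, hW.eigenvalues i) * evnorm v ^ 2 := by gcongr
    _ ≤ v ⬝ᵥ (W *ᵥ v) := hW.iInf_eigenvalues_mul_le v

end Matrix.IsHermitian

namespace Matrix.PosDef

variable {ι : Type*} [Fintype ι] [DecidableEq ι] [Nonempty ι] {M : Matrix ι ι ℝ}

lemma iInf_eigenvalues_pos (hM : M.PosDef) : 0 < ⨅ i, hM.1.eigenvalues i := by
  obtain ⟨j, hj⟩ := Finite.exists_min hM.1.eigenvalues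
  exact (hM.eigenvalues_pos j).trans_le (le_ciInf hj)

lemma iSup_eigenvalues_pos (hM : M.PosDef) : 0 < ⨆ i, hM.1.eigenvalues i :=
  have i := Classical.arbitrary ι
  (hM.eigenvalues_pos i).trans_le (le_ciSup (Set.finite_range _).bddAbove i)

lemma evnorm_le_sqrt_div (hM : M.PosDef) {v : ι → ℝ} {V : ℝ} (hV : v ⬝ᵥ (M *ᵥ v) ≤ V) :
    evnorm v ≤ √V / √(⨅ i, hM.1.eigenvalues i) := by
  have hpos := hM.iInf_eigenvalues_pos
  rw [← Real.sqrt_div' _ hpos.le]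
  refine Real.le_sqrt_of_sq_le ?_
  rw [le_div_iff₀ hpos, mul_comm]
  exact (hM.1.iInf_eigenvalues_mul_le v).trans hV

end Matrix.PosDef

section LyapunovFunction

variable {ι : Type*} [Fintype ι] {P₁ P₂ : Matrix ι ι ℝ}

def lyapunovFn (P₁ P₂ : Matrix ι ι ℝ) (z e : ι → ℝ) : ℝ :=
  z ⬝ᵥ (P₁ *ᵥ z) + e ⬝ᵥ (P₂ *ᵥ e)

lemma lyapunovFn_nonneg (hP₁ : P₁.PosSemidef) (hP₂ : P₂.PosSemidef) (z e : ι → ℝ) :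
    0 ≤ lyapunovFn P₁ P₂ z e :=
  add_nonneg (by simpa using hP₁.dotProduct_mulVec_nonneg z)
    (by simpa using hP₂.dotProduct_mulVec_nonneg e)

variable [DecidableEq ι] [Nonempty ι]

lemma min_div_max_mul_lyapunovFn_le {W₁ W₂ : Matrix ι ι ℝ} (hW₁ : W₁.PosDef) (hW₂ : W₂.PosDef)
    (hP₁ : P₁.PosDef) (hP₂ : P₂.PosDef) (z e : ι → ℝ) :
    min (⨅ i, hW₁.1.eigenvalues i) (⨅ i, hW₂.1.eigenvalues i) /
        max (⨆ i, hP₁.1.eigenvalues i) (⨆ i, hP₂.1.eigenvalues i) * lyapunovFn P₁ P₂ z e ≤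
      z ⬝ᵥ (W₁ *ᵥ z) + e ⬝ᵥ (W₂ *ᵥ e) := by
  have hμ0 := le_min hW₁.iInf_eigenvalues_pos.le hW₂.iInf_eigenvalues_pos.le
  have hΛ0 := hP₁.iSup_eigenvalues_pos.trans_le (le_max_left _ (⨆ i, hP₂.1.eigenvalues i))
  rw [lyapunovFn, mul_add]
  gcongr
  · exact hP₁.1.div_mul_dotProduct_mulVec_le hW₁.1 hμ0 (min_le_left _ _) hΛ0 (le_max_left _ _) z
  · exact hP₂.1.div_mul_dotProduct_mulVec_le hW₂.1 hμ0 (min_le_right _ _) hΛ0 (le_max_right _ _) e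

lemma evnorm_le_sqrt_lyapunovFn_div_left (hP₁ : P₁.PosDef) (hP₂ : P₂.PosDef) (z e : ι → ℝ) :
    evnorm z ≤ √(lyapunovFn P₁ P₂ z e) / √(⨅ i, hP₁.1.eigenvalues i) :=
  hP₁.evnorm_le_sqrt_div <| le_add_of_nonneg_right <| by
    simpa using hP₂.posSemidef.dotProduct_mulVec_nonneg e

lemma evnorm_le_sqrt_lyapunovFn_div_right (hP₁ : P₁.PosDef) (hP₂ : P₂.PosDef) (z e : ι → ℝ) :
    evnorm e ≤ √(lyapunovFn P₁ P₂ z e) / √(⨅ i, hP₂.1.eigenvalues i) :=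
  hP₂.evnorm_le_sqrt_div <| le_add_of_nonneg_left <| by
    simpa using hP₁.posSemidef.dotProduct_mulVec_nonneg z

lemma dotProduct_mulVec_le_opNorm_div_mul_lyapunovFn (hP₁ : P₁.PosDef) (hP₂ : P₂.PosDef)
    (M : Matrix ι ι ℝ) (z e : ι → ℝ) :
    z ⬝ᵥ (M *ᵥ e) ≤ opNorm M / √((⨅ i, hP₁.1.eigenvalues i) * ⨅ i, hP₂.1.eigenvalues i) *
      lyapunovFn P₁ P₂ z e := by
  have hV := lyapunovFn_nonneg hP₁.posSemidef hP₂.posSemidef z e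
  have := opNorm_nonneg M
  have := evnorm_nonneg e
  have := evnorm_le_sqrt_lyapunovFn_div_left hP₁ hP₂ z e
  have := evnorm_le_sqrt_lyapunovFn_div_right hP₁ hP₂ z e
  calc z ⬝ᵥ (M *ᵥ e) ≤ opNorm M * evnorm z * evnorm e :=
        (le_abs_self _).trans (abs_dotProduct_mulVec_le_opNorm M z e)
    _ ≤ opNorm M * (√(lyapunovFn P₁ P₂ z e) / √(⨅ i, hP₁.1.eigenvalues i)) *
          (√(lyapunovFn P₁ P₂ z e) / √(⨅ i, hP₂.1.eigenvalues i)) := by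
        gcongr
    _ = _ := by
        rw [Real.sqrt_mul hP₁.iInf_eigenvalues_pos.le]
        field_simp
        rw [Real.sq_sqrt hV]

lemma cubic_terms_le_mul_sqrt_lyapunovFn_pow_three (hP₁ : P₁.PosDef) (hP₂ : P₂.PosDef)
    (Q : Matrix ι ι ℝ) (M₁ M₂ : Matrix ι (Fin 1) ℝ) (z e : ι → ℝ) :
    2 * ((z ⬝ᵥ (Q *ᵥ z)) * (z ⬝ᵥ fun i => M₁ i 0)) +
        2 * ((2 * (z ⬝ᵥ (Q *ᵥ e)) + e ⬝ᵥ (Q *ᵥ e)) * (e ⬝ᵥ fun i => M₂ i 0)) ≤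
      (2 * opNorm M₁ * opNorm Q / (⨅ i, hP₁.1.eigenvalues i) ^ ((3 : ℝ) / 2) +
        4 * opNorm M₂ * opNorm Q / (√(⨅ i, hP₁.1.eigenvalues i) * ⨅ i, hP₂.1.eigenvalues i) +
        2 * opNorm M₂ * opNorm Q / (⨅ i, hP₂.1.eigenvalues i) ^ ((3 : ℝ) / 2)) *
      √(lyapunovFn P₁ P₂ z e) ^ 3 := by
  have hl₁ := hP₁.iInf_eigenvalues_pos
  have hl₂ := hP₂.iInf_eigenvalues_pos
  rw [rpow_three_div_two_eq_sqrt_pow hl₁.le, rpow_three_div_two_eq_sqrt_pow hl₂.le]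
  set r := √(lyapunovFn P₁ P₂ z e)
  set s₁ := √(⨅ i, hP₁.1.eigenvalues i)
  set s₂ := √(⨅ i, hP₂.1.eigenvalues i)
  have hs₁ : 0 < s₁ := Real.sqrt_pos.2 hl₁
  have hs₂ : 0 < s₂ := Real.sqrt_pos.2 hl₂
  rw [← Real.sq_sqrt hl₂.le]
  have hz : evnorm z ≤ r / s₁ := evnorm_le_sqrt_lyapunovFn_div_left hP₁ hP₂ z e
  have he : evnorm e ≤ r / s₂ := evnorm_le_sqrt_lyapunovFn_div_right hP₁ hP₂ z e
  have := opNorm_nonneg Q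
  have := opNorm_nonneg M₁
  have := opNorm_nonneg M₂
  have := evnorm_nonneg z
  have := evnorm_nonneg e
  have hzz := mul_le_mul_of_abs_le_of_abs_le (abs_dotProduct_mulVec_le_opNorm Q z z)
    (abs_dotProduct_col_le_opNorm M₁ z)
  have hQze : |2 * (z ⬝ᵥ (Q *ᵥ e)) + e ⬝ᵥ (Q *ᵥ e)| ≤
      2 * (opNorm Q * evnorm z * evnorm e) + opNorm Q * evnorm e * evnorm e := by
    refine (abs_add_le _ _).trans ?_
    rw [abs_mul, abs_two]
    gcongr
    · exact abs_dotProduct_mulVec_le_opNorm Q z e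
    · exact abs_dotProduct_mulVec_le_opNorm Q e e
  have hze := mul_le_mul_of_abs_le_of_abs_le hQze (abs_dotProduct_col_le_opNorm M₂ e)
  calc _ ≤ 2 * (opNorm Q * evnorm z * evnorm z * (opNorm M₁ * evnorm z)) +
        2 * ((2 * (opNorm Q * evnorm z * evnorm e) + opNorm Q * evnorm e * evnorm e) *
          (opNorm M₂ * evnorm e)) := by linarith
    _ ≤ 2 * (opNorm Q * (r / s₁) * (r / s₁) * (opNorm M₁ * (r / s₁))) +
        2 * ((2 * (opNorm Q * (r / s₁) * (r / s₂)) + opNorm Q * (r / s₂) * (r / s₂)) *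
          (opNorm M₂ * (r / s₂))) := by gcongr
    _ = _ := by
      field_simp
      ring

end LyapunovFunction

section AugmentedDynamics

variable {Ap : Matrix (Fin np) (Fin np) ℝ} {Ac : Matrix (Fin nc) (Fin nc) ℝ}
  {Bp : Matrix (Fin np) (Fin 1) ℝ} {Bc : Matrix (Fin nc) (Fin 1) ℝ}
  {Cc : Matrix (Fin 1) (Fin nc) ℝ} {Dc : ℝ} {Qp : Matrix (Fin np) (Fin np) ℝ} {π : Fin np → ℝ}
  {L : Matrix (Fin np ⊕ Fin nc) (Fin 1) ℝ}

lemma dotProduct_mulVec_zdot (P : Matrix (Fin np ⊕ Fin nc) (Fin np ⊕ Fin nc) ℝ)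
    (z e : Fin np ⊕ Fin nc → ℝ) :
    z ⬝ᵥ (P *ᵥ zdot Ap Ac Bp Bc Cc Dc Qp π z e) =
      z ⬝ᵥ (P *ᵥ (Fbar Ap Ac Bp Bc Cc Dc Qp π *ᵥ z)) +
        (z ⬝ᵥ (Qmat Qp *ᵥ z)) * (z ⬝ᵥ fun i => (P * Bmat Bp Bc Dc) i 0) +
        z ⬝ᵥ ((P * Bmat Bp Bc Dc * Hbar Qp π) *ᵥ e) := by
  simp only [zdot, Fbar, add_mulVec, mulVec_add, dotProduct_add, col_mul_row_mulVec,
    mulVec_smul, dotProduct_smul, smul_eq_mul, mulVec_col]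
  ring

lemma dotProduct_mulVec_edot {P : Matrix (Fin np ⊕ Fin nc) (Fin np ⊕ Fin nc) ℝ}
    (hP : P.IsHermitian) (z e : Fin np ⊕ Fin nc → ℝ) :
    e ⬝ᵥ (P *ᵥ edot Ap Ac Bp Bc Cc Dc Qp π L z e) =
      e ⬝ᵥ (P *ᵥ ((Fbar Ap Ac Bp Bc Cc Dc Qp π + L * Hbar Qp π) *ᵥ e)) +
        z ⬝ᵥ (((Hbar Qp π)ᵀ * (Bmat Bp Bc Dc + L)ᵀ * P) *ᵥ e) +
        (2 * (z ⬝ᵥ (Qmat Qp *ᵥ e)) + e ⬝ᵥ (Qmat Qp *ᵥ e)) *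
          (e ⬝ᵥ fun i => (P * (Bmat Bp Bc Dc + L)) i 0) := by
  have hPt : Pᵀ = P := (isHermitian_iff_isSymm.1 hP).eq
  have hcross : z ⬝ᵥ (((Hbar Qp π)ᵀ * (Bmat Bp Bc Dc + L)ᵀ * P) *ᵥ e) =
      e ⬝ᵥ (P *ᵥ (((Bmat Bp Bc Dc + L) * Hbar Qp π) *ᵥ z)) := by
    rw [← hPt, ← transpose_mul, ← transpose_mul, dotProduct_transpose_mulVec, hPt,
      mulVec_mulVec]
  simp only [edot, hcross, mulVec_add, dotProduct_add, mulVec_smul, dotProduct_smul,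
    smul_eq_mul, mulVec_col]

end AugmentedDynamics

theorem lyapunov_decay_in_sublevel_set_general
    (Ap : Matrix (Fin np) (Fin np) ℝ) (Ac : Matrix (Fin nc) (Fin nc) ℝ)
    (Bp : Matrix (Fin np) (Fin 1) ℝ) (Bc : Matrix (Fin nc) (Fin 1) ℝ)
    (Cc : Matrix (Fin 1) (Fin nc) ℝ) (Dc : ℝ)
    (Qp : Matrix (Fin np) (Fin np) ℝ)
    (π : Fin np → ℝ) (L : Matrix (Fin np ⊕ Fin nc) (Fin 1) ℝ)
    (W1 W2 P1 P2 : Matrix (Fin np ⊕ Fin nc) (Fin np ⊕ Fin nc) ℝ)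
    (hW1 : W1.PosDef) (hW2 : W2.PosDef) (hP1 : P1.PosDef) (hP2 : P2.PosDef)
    (hLyap1 : (Fbar Ap Ac Bp Bc Cc Dc Qp π)ᵀ * P1 + P1 * Fbar Ap Ac Bp Bc Cc Dc Qp π = -W1)
    (hLyap2 : (Fbar Ap Ac Bp Bc Cc Dc Qp π + L * Hbar Qp π)ᵀ * P2 +
      P2 * (Fbar Ap Ac Bp Bc Cc Dc Qp π + L * Hbar Qp π) = -W2)
    (c1 c3 c4 c2 : ℝ)
    (hc1 : c1 = min (⨅ i, hW1.1.eigenvalues i) (⨅ i, hW2.1.eigenvalues i) /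
      max (⨆ i, hP1.1.eigenvalues i) (⨆ i, hP2.1.eigenvalues i))
    (hc3 : c3 = (2 * opNorm (P1 * Bmat Bp Bc Dc * Hbar Qp π (nc := nc)) +
        2 * opNorm ((Hbar Qp π (nc := nc))ᵀ * (Bmat Bp Bc Dc + L)ᵀ * P2)) /
      Real.sqrt ((⨅ i, hP1.1.eigenvalues i) * (⨅ i, hP2.1.eigenvalues i)))
    (hc4 : c4 =
      2 * opNorm (P1 * Bmat Bp Bc Dc) * opNorm (Qmat Qp (nc := nc)) /
        (⨅ i, hP1.1.eigenvalues i) ^ ((3 : ℝ) / 2) +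
      4 * opNorm (P2 * (Bmat Bp Bc Dc + L)) * opNorm (Qmat Qp (nc := nc)) /
        (Real.sqrt (⨅ i, hP1.1.eigenvalues i) * (⨅ i, hP2.1.eigenvalues i)) +
      2 * opNorm (P2 * (Bmat Bp Bc Dc + L)) * opNorm (Qmat Qp (nc := nc)) /
        (⨅ i, hP2.1.eigenvalues i) ^ ((3 : ℝ) / 2))
    (hc2 : c2 = c1 - c3)
    (δ : ℝ) (hδ : δ < c2) :
    ∀ z e : Fin np ⊕ Fin nc → ℝ,
      z ⬝ᵥ (P1 *ᵥ z) + e ⬝ᵥ (P2 *ᵥ e) ≤ ((c2 - δ) / c4) ^ 2 →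
      2 * (z ⬝ᵥ (P1 *ᵥ zdot Ap Ac Bp Bc Cc Dc Qp π z e)) +
          2 * (e ⬝ᵥ (P2 *ᵥ edot Ap Ac Bp Bc Cc Dc Qp π L z e)) ≤
        -δ * (z ⬝ᵥ (P1 *ᵥ z) + e ⬝ᵥ (P2 *ᵥ e)) := by
  intro z e hV
  obtain hempty | hne := isEmpty_or_nonempty (Fin np ⊕ Fin nc)
  · simp [dotProduct]
  change lyapunovFn P1 P2 z e ≤ _ at hV
  change _ ≤ -δ * lyapunovFn P1 P2 z e
  rw [dotProduct_mulVec_zdot, dotProduct_mulVec_edot hP2.1]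
  have hF₁ := two_mul_dotProduct_mulVec_mulVec_of_lyapunov hP1.1 hLyap1 z
  have hF₂ := two_mul_dotProduct_mulVec_mulVec_of_lyapunov hP2.1 hLyap2 e
  have hdiss := hc1 ▸ min_div_max_mul_lyapunovFn_le hW1 hW2 hP1 hP2 z e
  have hcross₁ := dotProduct_mulVec_le_opNorm_div_mul_lyapunovFn hP1 hP2
    (P1 * Bmat Bp Bc Dc * Hbar Qp π) z e
  have hcross₂ := dotProduct_mulVec_le_opNorm_div_mul_lyapunovFn hP1 hP2
    ((Hbar Qp π)ᵀ * (Bmat Bp Bc Dc + L)ᵀ * P2) z e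
  have hcubic := hc4 ▸ cubic_terms_le_mul_sqrt_lyapunovFn_pow_three hP1 hP2 (Qmat Qp)
    (P1 * Bmat Bp Bc Dc) (P2 * (Bmat Bp Bc Dc + L)) z e
  have hsublevel : c4 * √(lyapunovFn P1 P2 z e) ^ 3 ≤ (c2 - δ) * lyapunovFn P1 P2 z e := by
    have hr := mul_sqrt_le_of_le_div_sq (sub_nonneg.2 hδ.le) hV
    have hV₀ := lyapunovFn_nonneg hP1.posSemidef hP2.posSemidef z e
    calc c4 * √(lyapunovFn P1 P2 z e) ^ 3
        = c4 * √(lyapunovFn P1 P2 z e) * √(lyapunovFn P1 P2 z e) ^ 2 := by ring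
      _ ≤ (c2 - δ) * lyapunovFn P1 P2 z e := by rw [Real.sq_sqrt hV₀]; gcongr
  subst hc2 hc3
  linear_combination hF₁ + hF₂ + hdiss + 2 * hcross₁ + 2 * hcross₂ + hcubic + hsublevel

/-- inside the sublevel set `V ≤ ((c_2−δ)/c_4)²`, the Lyapunov derivative
satisfies `2z^⊤P_1ż + 2e^⊤P_2ė ≤ −δ V`. -/
theorem lyapunov_decay_in_sublevel_set
    (Ap : Matrix (Fin np) (Fin np) ℝ) (Ac : Matrix (Fin nc) (Fin nc) ℝ)
    (Bp : Matrix (Fin np) (Fin 1) ℝ) (Bc : Matrix (Fin nc) (Fin 1) ℝ)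
    (Cc : Matrix (Fin 1) (Fin nc) ℝ) (Dc : ℝ)
    (Qp : Matrix (Fin np) (Fin np) ℝ) (hQp : Qp.IsSymm)
    (π : Fin np → ℝ) (L : Matrix (Fin np ⊕ Fin nc) (Fin 1) ℝ)
    (W1 W2 P1 P2 : Matrix (Fin np ⊕ Fin nc) (Fin np ⊕ Fin nc) ℝ)
    (hW1 : W1.PosDef) (hW2 : W2.PosDef) (hP1 : P1.PosDef) (hP2 : P2.PosDef)
    (hLyap1 : (Fbar Ap Ac Bp Bc Cc Dc Qp π)ᵀ * P1 + P1 * Fbar Ap Ac Bp Bc Cc Dc Qp π = -W1)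
    (hLyap2 : (Fbar Ap Ac Bp Bc Cc Dc Qp π + L * Hbar Qp π)ᵀ * P2 +
      P2 * (Fbar Ap Ac Bp Bc Cc Dc Qp π + L * Hbar Qp π) = -W2)
    (c1 c3 c4 c2 : ℝ)
    (hc1 : c1 = min (⨅ i, hW1.1.eigenvalues i) (⨅ i, hW2.1.eigenvalues i) /
      max (⨆ i, hP1.1.eigenvalues i) (⨆ i, hP2.1.eigenvalues i))
    (hc3 : c3 = (2 * opNorm (P1 * Bmat Bp Bc Dc * Hbar Qp π (nc := nc)) +
        2 * opNorm ((Hbar Qp π (nc := nc))ᵀ * (Bmat Bp Bc Dc + L)ᵀ * P2)) /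
      Real.sqrt ((⨅ i, hP1.1.eigenvalues i) * (⨅ i, hP2.1.eigenvalues i)))
    (hc4 : c4 =
      2 * opNorm (P1 * Bmat Bp Bc Dc) * opNorm (Qmat Qp (nc := nc)) /
        (⨅ i, hP1.1.eigenvalues i) ^ ((3 : ℝ) / 2) +
      4 * opNorm (P2 * (Bmat Bp Bc Dc + L)) * opNorm (Qmat Qp (nc := nc)) /
        (Real.sqrt (⨅ i, hP1.1.eigenvalues i) * (⨅ i, hP2.1.eigenvalues i)) +
      2 * opNorm (P2 * (Bmat Bp Bc Dc + L)) * opNorm (Qmat Qp (nc := nc)) /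
        (⨅ i, hP2.1.eigenvalues i) ^ ((3 : ℝ) / 2))
    (hc2 : c2 = c1 - c3) (hc2pos : 0 < c2)
    (δ : ℝ) (hδ0 : 0 < δ) (hδ : δ < c2) :
    ∀ z e : Fin np ⊕ Fin nc → ℝ,
      z ⬝ᵥ (P1 *ᵥ z) + e ⬝ᵥ (P2 *ᵥ e) ≤ ((c2 - δ) / c4) ^ 2 →
      2 * (z ⬝ᵥ (P1 *ᵥ zdot Ap Ac Bp Bc Cc Dc Qp π z e)) +
          2 * (e ⬝ᵥ (P2 *ᵥ edot Ap Ac Bp Bc Cc Dc Qp π L z e)) ≤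
        -δ * (z ⬝ᵥ (P1 *ᵥ z) + e ⬝ᵥ (P2 *ᵥ e)) :=
  lyapunov_decay_in_sublevel_set_general Ap Ac Bp Bc Cc Dc Qp π L W1 W2 P1 P2 hW1 hW2 hP1 hP2 hLyap1
    hLyap2 c1 c3 c4 c2 hc1 hc3 hc4 hc2 δ hδ
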